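/- Let ψ : ℝ → ℝ₊ be continuous, positive-definite, symmetric, and satisfy generalized homogeneity with a class-K∞ function f_ψ. Let {x_t} be a sequence in ℝⁿ and T > 0 a fixed integer. Then the following are equivalent: (i) there exist class-K∞ functions α, β with α(‖θ‖) ≤ Σ_{k=t+1}^{t+T} ψ(x_kᵀθ) ≤ β(‖θ‖) for all t ∈ ℕ and θ ∈ ℝⁿ; (ii) there exist constants γ₁, γ₂ > 0 with γ₁ ≤ Σ_{k=t+1}^{t+T} ψ(x_kᵀθ/‖θ‖) ≤ γ₂ for all t ∈ ℕ and all nonzero θ ∈ ℝⁿ. -/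

import Mathlib

/-!
Both directions come from rescaling `θ` to the unit sphere. From (i) to (ii), evaluate the
bounds of (i) at `θ / ‖θ‖` to get `γ₁ = α 1` and `γ₂ = β 1`. From (ii) to (i), generalized
homogeneity with `r = ‖θ‖` compares `ψ (xₖᵀθ)` with `ψ (xₖᵀθ / ‖θ‖)` in both directions:
`fψ ‖θ‖ · ψ (xₖᵀθ / ‖θ‖) ≤ ψ (xₖᵀθ)` and `fψ ‖θ‖⁻¹ · ψ (xₖᵀθ) ≤ ψ (xₖᵀθ / ‖θ‖)`. Summing gives
(i) with `α s = γ₁ fψ(s)` and `β s = γ₂ / fψ(1/s)`, and `s ↦ 1 / fψ(1/s)` is again of class K∞.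
-/

open Finset Filter Topology

/-- A class-K∞ function: continuous on [0,∞), zero at zero, strictly increasing
on [0,∞), and tending to ∞ at ∞. -/
def ClassKInf (f : ℝ → ℝ) : Prop :=
  ContinuousOn f (Set.Ici 0) ∧ f 0 = 0 ∧ StrictMonoOn f (Set.Ici 0) ∧
    Tendsto f atTop atTop

/-- Dot product on ℝⁿ. -/
def dot {n : ℕ} (x θ : Fin n → ℝ) : ℝ := ∑ i, x i * θ i

/-- `N` is a norm on ℝⁿ. -/
def IsNorm {n : ℕ} (N : (Fin n → ℝ) → ℝ) : Prop :=
  (∀ x, 0 ≤ N x) ∧ (∀ x, N x = 0 ↔ x = 0) ∧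
    (∀ (a : ℝ) (x), N (a • x) = |a| * N x) ∧ (∀ x y, N (x + y) ≤ N x + N y)

namespace ClassKInf

variable {f : ℝ → ℝ} (hf : ClassKInf f)
include hf

theorem pos {s : ℝ} (hs : 0 < s) : 0 < f s := by
  simpa only [hf.2.1] using hf.2.2.1 Set.self_mem_Ici (Set.mem_Ici.mpr hs.le) hs

theorem const_mul {c : ℝ} (hc : 0 < c) : ClassKInf fun s => c * f s :=
  ⟨continuousOn_const.mul hf.1, by simp only [hf.2.1, mul_zero],
    fun _ ha _ hb hab => mul_lt_mul_of_pos_left (hf.2.2.1 ha hb hab) hc,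
    hf.2.2.2.const_mul_atTop hc⟩

theorem tendsto_nhdsGT_zero : Tendsto f (𝓝[>] 0) (𝓝[>] 0) := by
  refine tendsto_nhdsWithin_iff.2 ⟨?_, eventually_nhdsWithin_of_forall fun _ hs => hf.pos hs⟩
  simpa only [hf.2.1] using
    (hf.1 0 Set.self_mem_Ici).mono_left (nhdsWithin_mono 0 Set.Ioi_subset_Ici_self)

-- At `s = 0` this is `(f 0)⁻¹ = 0`, by the convention `0⁻¹ = 0`.
theorem inv_comp_inv : ClassKInf fun s => (f s⁻¹)⁻¹ := by
  have hzero : (f 0⁻¹)⁻¹ = 0 := by simp only [inv_zero, hf.2.1]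
  refine ⟨fun s hs => ?_, hzero, fun a ha b _ hab => ?_, ?_⟩
  · rcases (Set.mem_Ici.mp hs).eq_or_lt with rfl | hs
    · rw [← continuousWithinAt_Ioi_iff_Ici, ContinuousWithinAt, hzero]
      exact tendsto_inv_atTop_zero.comp (hf.2.2.2.comp tendsto_inv_nhdsGT_zero)
    · have hcont : ContinuousAt (fun s => f s⁻¹) s :=
        (hf.1.continuousAt (Ici_mem_nhds (inv_pos.2 hs))).comp (continuousAt_inv₀ hs.ne')
      exact (hcont.inv₀ (hf.pos (inv_pos.2 hs)).ne').continuousWithinAt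
  · have hb : 0 < b := (Set.mem_Ici.mp ha).trans_lt hab
    rcases (Set.mem_Ici.mp ha).eq_or_lt with rfl | ha
    · simpa only [hzero] using inv_pos.2 (hf.pos (inv_pos.2 hb))
    · refine (inv_lt_inv₀ (hf.pos (inv_pos.2 ha)) (hf.pos (inv_pos.2 hb))).2 ?_
      exact hf.2.2.1 (inv_pos.2 hb).le (inv_pos.2 ha).le ((inv_lt_inv₀ hb ha).2 hab)
  · exact (hf.tendsto_nhdsGT_zero.comp tendsto_inv_atTop_nhdsGT_zero).inv_tendsto_nhdsGT_zero

end ClassKInf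

theorem dot_smul {n : ℕ} (x θ : Fin n → ℝ) (a : ℝ) : dot x (a • θ) = a * dot x θ := by
  simp only [dot, mul_sum, Pi.smul_apply, smul_eq_mul, mul_left_comm]

theorem dot_zero {n : ℕ} (x : Fin n → ℝ) : dot x 0 = 0 := by
  simp only [dot, Pi.zero_apply, mul_zero, sum_const_zero]

namespace IsNorm

variable {n : ℕ} {N : (Fin n → ℝ) → ℝ} (hN : IsNorm N)
include hN

theorem map_zero : N 0 = 0 := (hN.2.1 0).2 rfl

theorem pos {θ : Fin n → ℝ} (hθ : θ ≠ 0) : 0 < N θ :=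
  (hN.1 θ).lt_of_ne fun h => hθ ((hN.2.1 θ).1 h.symm)

theorem inv_smul_self {θ : Fin n → ℝ} (hθ : θ ≠ 0) : N ((N θ)⁻¹ • θ) = 1 := by
  rw [hN.2.2.1, abs_of_pos (inv_pos.2 (hN.pos hθ)), inv_mul_cancel₀ (hN.pos hθ).ne']

end IsNorm

def GenHomogeneous (ψ f : ℝ → ℝ) : Prop :=
  ∀ e r : ℝ, r ≠ 0 → f (1 / |r|) * ψ (r * e) ≤ ψ e

namespace GenHomogeneous

variable {ψ f : ℝ → ℝ} (h : GenHomogeneous ψ f)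
include h

theorem mul_apply_div_le {r : ℝ} (hr : 0 < r) (e : ℝ) : f r * ψ (e / r) ≤ ψ e := by
  simpa only [abs_inv, abs_of_pos hr, one_div, inv_inv, inv_mul_eq_div] using
    h e r⁻¹ (inv_ne_zero hr.ne')

theorem mul_apply_le_apply_div {r : ℝ} (hr : 0 < r) (e : ℝ) : f r⁻¹ * ψ e ≤ ψ (e / r) := by
  simpa only [abs_of_pos hr, one_div, mul_div_cancel₀ _ hr.ne'] using h (e / r) r hr.ne'

theorem sum_bounds_of_sum_div_bounds (hf : ClassKInf f) {ι : Type*} (s : Finset ι)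
    (v : ι → ℝ) {r γ₁ γ₂ : ℝ} (hr : 0 < r)
    (hv : γ₁ ≤ ∑ k ∈ s, ψ (v k / r) ∧ ∑ k ∈ s, ψ (v k / r) ≤ γ₂) :
    γ₁ * f r ≤ ∑ k ∈ s, ψ (v k) ∧ ∑ k ∈ s, ψ (v k) ≤ γ₂ * (f r⁻¹)⁻¹ := by
  constructor
  · calc γ₁ * f r ≤ f r * ∑ k ∈ s, ψ (v k / r) := by
          rw [mul_comm]; exact mul_le_mul_of_nonneg_left hv.1 (hf.pos hr).le
      _ = ∑ k ∈ s, f r * ψ (v k / r) := mul_sum _ _ _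
      _ ≤ ∑ k ∈ s, ψ (v k) := sum_le_sum fun k _ => h.mul_apply_div_le hr (v k)
  · have hfr : 0 < f r⁻¹ := hf.pos (inv_pos.2 hr)
    rw [← div_eq_mul_inv, le_div_iff₀ hfr, mul_comm]
    calc f r⁻¹ * ∑ k ∈ s, ψ (v k) = ∑ k ∈ s, f r⁻¹ * ψ (v k) := mul_sum _ _ _
      _ ≤ ∑ k ∈ s, ψ (v k / r) := sum_le_sum fun k _ => h.mul_apply_le_apply_div hr (v k)
      _ ≤ γ₂ := hv.2

end GenHomogeneous

theorem stmt_3_general {n : ℕ} (ψ : ℝ → ℝ) (fψ : ℝ → ℝ)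
    (hpd : ∀ e, ψ e = 0 ↔ e = 0)
    (hf : ClassKInf fψ)
    (hGH : ∀ (e r : ℝ), r ≠ 0 → fψ (1 / |r|) * ψ (r * e) ≤ ψ e)
    (x : ℕ → Fin n → ℝ) (T : ℕ)
    (N : (Fin n → ℝ) → ℝ) (hN : IsNorm N) :
    (∃ α β : ℝ → ℝ, ClassKInf α ∧ ClassKInf β ∧
        ∀ (t : ℕ) (θ : Fin n → ℝ),
          α (N θ) ≤ ∑ k ∈ Finset.Icc (t + 1) (t + T), ψ (dot (x k) θ) ∧
          ∑ k ∈ Finset.Icc (t + 1) (t + T), ψ (dot (x k) θ) ≤ β (N θ)) ↔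
    (∃ γ₁ γ₂ : ℝ, 0 < γ₁ ∧ 0 < γ₂ ∧
        ∀ (t : ℕ) (θ : Fin n → ℝ), θ ≠ 0 →
          γ₁ ≤ ∑ k ∈ Finset.Icc (t + 1) (t + T), ψ (dot (x k) θ / N θ) ∧
          ∑ k ∈ Finset.Icc (t + 1) (t + T), ψ (dot (x k) θ / N θ) ≤ γ₂) := by
  constructor
  · rintro ⟨α, β, hα, hβ, h⟩
    refine ⟨α 1, β 1, hα.pos one_pos, hβ.pos one_pos, fun t θ hθ => ?_⟩
    simpa only [hN.inv_smul_self hθ, dot_smul, inv_mul_eq_div] using h t ((N θ)⁻¹ • θ)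
  · rintro ⟨γ₁, γ₂, hγ₁, hγ₂, h⟩
    refine ⟨fun s => γ₁ * fψ s, fun s => γ₂ * (fψ s⁻¹)⁻¹, hf.const_mul hγ₁,
      hf.inv_comp_inv.const_mul hγ₂, fun t θ => ?_⟩
    rcases eq_or_ne θ 0 with rfl | hθ
    · have hψ : ψ 0 = 0 := (hpd 0).2 rfl
      simp only [hN.map_zero, dot_zero, hψ, hf.2.1, inv_zero, sum_const_zero, mul_zero,
        le_refl, and_self]
    · exact GenHomogeneous.sum_bounds_of_sum_div_bounds hGH hf _ _ (hN.pos hθ) (h t θ hθ)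

/-- equivalence of the two formulations of the generalized
persistence-of-excitation condition. -/
theorem stmt_3 {n : ℕ} (ψ : ℝ → ℝ) (fψ : ℝ → ℝ)
    (hcont : Continuous ψ) (hnn : ∀ e, 0 ≤ ψ e)
    (hpd : ∀ e, ψ e = 0 ↔ e = 0) (hsym : ∀ e, ψ (-e) = ψ e)
    (hf : ClassKInf fψ)
    (hGH : ∀ (e r : ℝ), r ≠ 0 → fψ (1 / |r|) * ψ (r * e) ≤ ψ e)
    (x : ℕ → Fin n → ℝ) (T : ℕ) (hT : 0 < T)
    (N : (Fin n → ℝ) → ℝ) (hN : IsNorm N) :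
    (∃ α β : ℝ → ℝ, ClassKInf α ∧ ClassKInf β ∧
        ∀ (t : ℕ) (θ : Fin n → ℝ),
          α (N θ) ≤ ∑ k ∈ Finset.Icc (t + 1) (t + T), ψ (dot (x k) θ) ∧
          ∑ k ∈ Finset.Icc (t + 1) (t + T), ψ (dot (x k) θ) ≤ β (N θ)) ↔
    (∃ γ₁ γ₂ : ℝ, 0 < γ₁ ∧ 0 < γ₂ ∧
        ∀ (t : ℕ) (θ : Fin n → ℝ), θ ≠ 0 →
          γ₁ ≤ ∑ k ∈ Finset.Icc (t + 1) (t + T), ψ (dot (x k) θ / N θ) ∧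
          ∑ k ∈ Finset.Icc (t + 1) (t + T), ψ (dot (x k) θ / N θ) ≤ γ₂) :=
  stmt_3_general ψ fψ hpd hf hGH x T N hN
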